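/- arXiv:1912.05828 — 6 statements merged into one kernel-verified Lean document; each statement's English description precedes it below -/
import Mathlib

section
/- If E is admissible and a, a' are both acceptable with respect to E, then E ∪ {a} is admissible and a' is acceptable with respect to E ∪ {a}. -/
def conflictFree {α : Type*} (att : α → α → Prop) (E : Set α) : Prop :=
  ∀ a ∈ E, ∀ b ∈ E, ¬ att a b

def acceptable {α : Type*} (att : α → α → Prop) (E : Set α) (a : α) : Prop :=
  ∀ b, att b a → ∃ c ∈ E, att c b

def admissible {α : Type*} (att : α → α → Prop) (E : Set α) : Prop :=
  conflictFree att E ∧ ∀ a ∈ E, acceptable att E a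

/-- Dung's Fundamental Lemma: if `E` is admissible and `a`, `a'` are both acceptable
with respect to `E`, then `E ∪ {a}` is admissible and `a'` is acceptable with respect
to `E ∪ {a}`. -/
theorem fundamental_lemma {α : Type*} (att : α → α → Prop) (E : Set α) (a a' : α)
    (hE : admissible att E) (ha : acceptable att E a) (ha' : acceptable att E a') :
    admissible att (E ∪ {a}) ∧ acceptable att (E ∪ {a}) a' := by
  obtain ⟨hcf, hacc⟩ := hE
  -- no element of E attacks a
  have hEa : ∀ b ∈ E, ¬ att b a := by
    intro b hb hba
    obtain ⟨c, hc, hcb⟩ := ha b hba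
    exact hcf c hc b hb hcb
  -- a does not attack a
  have haa : ¬ att a a := by
    intro h
    obtain ⟨c, hc, hca⟩ := ha a h
    exact hEa c hc hca
  -- a does not attack any element of E
  have haE : ∀ b ∈ E, ¬ att a b := by
    intro b hb hab
    obtain ⟨c, hc, hca⟩ := hacc b hb a hab
    exact hEa c hc hca
  have hcf' : conflictFree att (E ∪ {a}) := by
    rintro x (hx | rfl) y (hy | rfl)
    · exact hcf x hx y hy
    · exact hEa x hx
    · exact haE y hy
    · exact haa
  have hmono : ∀ z, acceptable att E z → acceptable att (E ∪ {a}) z := by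
    intro z hz b hbz
    obtain ⟨c, hc, hcb⟩ := hz b hbz
    exact ⟨c, Or.inl hc, hcb⟩
  refine ⟨⟨hcf', ?_⟩, hmono a' ha'⟩
  rintro x (hx | rfl)
  · exact hmono x (hacc x hx)
  · exact hmono x ha
end

section
/- An ideal extension (an admissible set that is a subset of every preferred extension) is contained in every complete extension that is maximal among complete extensions, and any two ideal extensions of a finite argumentation framework are comparable in the sense that their union is admissible; in particular, in a finite argumentation framework there is a unique maximal ideal extension. -/
def complete {α : Type*} (att : α → α → Prop) (E : Set α) : Prop :=
  admissible att E ∧ ∀ a, acceptable att E a → a ∈ E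

def preferred {α : Type*} (att : α → α → Prop) (E : Set α) : Prop :=
  admissible att E ∧ ∀ E' : Set α, admissible att E' → E ⊆ E' → E' = E

/-- `E` is ideal: admissible and a subset of every preferred extension. -/
def ideal {α : Type*} (att : α → α → Prop) (E : Set α) : Prop :=
  admissible att E ∧ ∀ P : Set α, preferred att P → E ⊆ P

/-!
Ideal sets lie inside a fixed preferred extension, so any family of them has a conflict-free
union; a union of admissible sets that is conflict-free is admissible, and it still lies in every
preferred extension. Hence the union of all ideal sets is the greatest ideal set. Finiteness gives
a preferred extension above every admissible set; above a maximal complete extension `C` it is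
complete, so it equals `C`, and every ideal set lies in `C`.
-/

section Argumentation

variable {α : Type*} {att : α → α → Prop}

theorem conflictFree.mono {E F : Set α} (hEF : E ⊆ F) (hF : conflictFree att F) :
    conflictFree att E :=
  fun a ha b hb => hF a (hEF ha) b (hEF hb)

theorem acceptable.mono {E F : Set α} {a : α} (hEF : E ⊆ F) (h : acceptable att E a) :
    acceptable att F a := fun b hb =>
  let ⟨c, hc, hcb⟩ := h b hb
  ⟨c, hEF hc, hcb⟩

theorem admissible_empty : admissible att ∅ :=
  ⟨fun _ h => h.elim, fun _ h => h.elim⟩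

theorem admissible_sUnion {S : Set (Set α)} (hS : ∀ E ∈ S, admissible att E)
    (hcf : conflictFree att (⋃₀ S)) : admissible att (⋃₀ S) := by
  refine ⟨hcf, ?_⟩
  rintro a ⟨E, hE, haE⟩
  exact ((hS E hE).2 a haE).mono (Set.subset_sUnion_of_mem hE)

theorem admissible.insert {P : Set α} {a : α} (hP : admissible att P)
    (ha : acceptable att P a) : admissible att (insert a P) := by
  obtain ⟨hcf, hdef⟩ := hP
  have not_att_a : ∀ x ∈ P, ¬ att x a := fun x hx hxa =>
    let ⟨c, hc, hcx⟩ := ha x hxa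
    hcf c hc x hx hcx
  refine ⟨?_, ?_⟩
  · rintro x (rfl | hx) y (rfl | hy) hxy
    · obtain ⟨c, hc, hca⟩ := ha _ hxy
      exact not_att_a c hc hca
    · obtain ⟨d, hd, hda⟩ := hdef y hy _ hxy
      exact not_att_a d hd hda
    · exact not_att_a x hx hxy
    · exact hcf x hx y hy hxy
  · rintro x (rfl | hx)
    · exact ha.mono (Set.subset_insert x P)
    · exact (hdef x hx).mono (Set.subset_insert a P)

theorem preferred.complete {P : Set α} (hP : preferred att P) : complete att P :=
  ⟨hP.1, fun a ha => hP.2 (insert a P) (hP.1.insert ha) (Set.subset_insert a P) ▸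
    Set.mem_insert a P⟩

theorem exists_preferred_superset [Finite α] {A : Set α} (hA : admissible att A) :
    ∃ P, preferred att P ∧ A ⊆ P := by
  obtain ⟨P, hAP, hP⟩ := Finite.exists_le_maximal (p := admissible att) hA
  exact ⟨P, ⟨hP.1, fun E hE hPE => (hP.eq_of_subset hE hPE).symm⟩, hAP⟩

theorem ideal.subset_of_maximal_complete [Finite α] {E C : Set α} (hE : ideal att E)
    (hC : complete att C) (hmax : ∀ C', complete att C' → C ⊆ C' → C' = C) : E ⊆ C := by
  obtain ⟨P, hP, hCP⟩ := exists_preferred_superset hC.1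
  rw [← hmax P hP.complete hCP]
  exact hE.2 P hP

theorem ideal_sUnion [Finite α] {S : Set (Set α)} (hS : ∀ E ∈ S, ideal att E) :
    ideal att (⋃₀ S) := by
  have below_preferred : ∀ P, preferred att P → ⋃₀ S ⊆ P :=
    fun P hP => Set.sUnion_subset fun E hE => (hS E hE).2 P hP
  obtain ⟨P₀, hP₀, -⟩ := exists_preferred_superset (admissible_empty (att := att))
  exact ⟨admissible_sUnion (fun E hE => (hS E hE).1) (hP₀.1.1.mono (below_preferred P₀ hP₀)),
    below_preferred⟩

end Argumentation

theorem ideal_properties_general {α : Type*} [Finite α] (att : α → α → Prop) :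
    (∀ E C : Set α, ideal att E →
        complete att C → (∀ C' : Set α, complete att C' → C ⊆ C' → C' = C) → E ⊆ C) ∧
    (∀ E₁ E₂ : Set α, ideal att E₁ → ideal att E₂ → admissible att (E₁ ∪ E₂)) ∧
    (∃! M : Set α, ideal att M ∧ ∀ E : Set α, ideal att E → E ⊆ M) := by
  refine ⟨fun E C hE => hE.subset_of_maximal_complete, fun E₁ E₂ h₁ h₂ => ?_, ?_⟩
  · rw [← Set.sUnion_pair]
    exact (ideal_sUnion (by simp [h₁, h₂])).1
  · refine ⟨⋃₀ {E | ideal att E}, ⟨ideal_sUnion fun _ => id, fun _ hE => Set.subset_sUnion_of_mem hE⟩,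
      fun M ⟨hM, hMmax⟩ => ?_⟩
    exact (Set.sUnion_subset hMmax).antisymm' (Set.subset_sUnion_of_mem hM)

/-- In a finite argumentation framework (which has at least one preferred extension):
every ideal extension is contained in every maximal complete extension, the union of
any two ideal extensions is admissible, and there is a unique maximal ideal
extension. -/
theorem ideal_properties {α : Type*} [Finite α] (att : α → α → Prop)
    (hpref : ∃ P : Set α, preferred att P) :
    (∀ E C : Set α, ideal att E →
        complete att C → (∀ C' : Set α, complete att C' → C ⊆ C' → C' = C) → E ⊆ C) ∧
    (∀ E₁ E₂ : Set α, ideal att E₁ → ideal att E₂ → admissible att (E₁ ∪ E₂)) ∧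
    (∃! M : Set α, ideal att M ∧ ∀ E : Set α, ideal att E → E ⊆ M) :=
  ideal_properties_general att
end

section
/- If the proponent has an admissible winning strategy σ in the dispute tree induced by argument a, then the set of arguments played by the proponent in the subtree T_σ is an admissible set containing a. -/
/-- The arguments labelling proponent nodes of the subtree `T_σ` of the dispute tree
induced by `a`, for a strategy `σ` of the proponent: the root `a` is played by the
proponent, the opponent plays every attacker `b` of a proponent argument, and the
proponent answers `b` with `σ b` (when defined). -/
inductive proPlayed {α : Type*} (att : α → α → Prop) (σ : α → Option α) (a : α) : α → Prop
  | root : proPlayed att σ a a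
  | step {p b c : α} : proPlayed att σ a p → att b p → σ b = some c → proPlayed att σ a c

/-- The arguments labelling opponent nodes of `T_σ`: the attackers of the arguments
played by the proponent. -/
def oppPlayed {α : Type*} (att : α → α → Prop) (σ : α → Option α) (a : α) (b : α) : Prop :=
  ∃ p, proPlayed att σ a p ∧ att b p

/-- `σ` is an admissible winning strategy in the dispute tree induced by `a`:
every opponent node of `T_σ` has exactly one child (the proponent answers every
opponent argument), and no argument labels both a proponent node and an opponent
node of `T_σ`. -/
def admissibleWinning {α : Type*} (att : α → α → Prop) (σ : α → Option α) (a : α) : Prop :=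
  (∀ b, oppPlayed att σ a b → ∃ c, σ b = some c) ∧
  (∀ x, proPlayed att σ a x → ¬ oppPlayed att σ a x)

section

variable {α : Type*} {att : α → α → Prop} {σ : α → Option α} {a : α}

theorem conflictFree_proPlayed (h : ∀ x, proPlayed att σ a x → ¬ oppPlayed att σ a x) :
    conflictFree att {x | proPlayed att σ a x} :=
  fun p hp q hq hqp => h p hp ⟨q, hq, hqp⟩

theorem acceptable_proPlayed (hσ : ∀ x y, σ x = some y → att y x)
    (h : ∀ b, oppPlayed att σ a b → ∃ c, σ b = some c) {p : α} (hp : proPlayed att σ a p) :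
    acceptable att {x | proPlayed att σ a x} p := by
  intro b hbp
  obtain ⟨c, hc⟩ := h b ⟨p, hp, hbp⟩
  exact ⟨c, proPlayed.step hp hbp hc, hσ b c hc⟩

end

/-- If the proponent has an admissible winning strategy `σ` in the dispute tree
induced by `a`, then the set of arguments played by the proponent in `T_σ` is an
admissible set containing `a`. -/
theorem admissibleWinning_proSet_admissible {α : Type*} (att : α → α → Prop)
    (σ : α → Option α) (a : α)
    (hσ : ∀ x y, σ x = some y → att y x)
    (hwin : admissibleWinning att σ a) :
    admissible att {x | proPlayed att σ a x} ∧ a ∈ {x | proPlayed att σ a x} :=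
  ⟨⟨conflictFree_proPlayed hwin.2, fun _ hp => acceptable_proPlayed hσ hwin.1 hp⟩,
    proPlayed.root⟩
end

section
/- If argument a belongs to some admissible set E of a finitary argumentation framework, then the proponent has an admissible winning strategy in the dispute tree induced by a, obtained by always answering an opponent argument b with some attacker of b belonging to E. -/
/-- If `a` belongs to some admissible set `E` of a finitary argumentation framework,
then the proponent has an admissible winning strategy in the dispute tree induced by
`a`, obtained by always answering an opponent argument `b` with some attacker of `b`
belonging to `E`. -/
theorem mem_admissible_imp_admissibleWinning {α : Type*} (att : α → α → Prop)
    (hfin : ∀ x : α, {b | att b x}.Finite)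
    (E : Set α) (a : α) (hE : admissible att E) (ha : a ∈ E) :
    ∃ σ : α → Option α, (∀ x y, σ x = some y → att y x ∧ y ∈ E) ∧
      admissibleWinning att σ a := by
  classical
  set σ : α → Option α := fun b =>
    if h : ∃ c ∈ E, att c b then some h.choose else none with hσ
  have hσspec : ∀ x y, σ x = some y → att y x ∧ y ∈ E := by
    intro x y hxy
    simp only [hσ] at hxy
    split at hxy
    · next h =>
      obtain ⟨hcE, hatt⟩ := h.choose_spec
      cases hxy
      exact ⟨hatt, hcE⟩
    · exact absurd hxy (by simp)
  have hproE : ∀ x, proPlayed att σ a x → x ∈ E := by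
    intro x hx
    induction hx with
    | root => exact ha
    | step hp hb hc ih => exact (hσspec _ _ hc).2
  refine ⟨σ, hσspec, ?_, ?_⟩
  · intro b ⟨p, hp, hbp⟩
    have : ∃ c ∈ E, att c b := hE.2 p (hproE p hp) b hbp
    exact ⟨this.choose, by simp [hσ, this]⟩
  · intro x hx ⟨p, hp, hxp⟩
    exact hE.1 x (hproE x hx) p (hproE p hp) hxp
end

section
/- If the proponent has a grounded winning strategy in the dispute tree induced by a (every opponent node in T_σ has exactly one child and every branch of T_σ is finite), then a belongs to the grounded extension. -/
/-- The characteristic function, as a monotone map on sets of arguments. -/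
def charF {α : Type*} (att : α → α → Prop) : Set α →o Set α :=
  ⟨fun E => {a | acceptable att E a}, fun _ _ h _ ha b hb =>
    let ⟨c, hc, hcb⟩ := ha b hb; ⟨c, h hc, hcb⟩⟩

/-- The grounded extension: the least fixed point of the characteristic function. -/
def grounded {α : Type*} (att : α → α → Prop) : Set α :=
  OrderHom.lfp (charF att)

/-- `σ` is a grounded winning strategy in the dispute tree induced by `a`: every
opponent node of `T_σ` has exactly one child, and every branch of `T_σ` is finite
(there is no infinite sequence of proponent moves along a branch). -/
def groundedWinning {α : Type*} (att : α → α → Prop) (σ : α → Option α) (a : α) : Prop :=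
  (∀ b, oppPlayed att σ a b → ∃ c, σ b = some c) ∧
  ¬ ∃ g : ℕ → α, g 0 = a ∧ ∀ n, ∃ b, att b (g n) ∧ σ b = some (g (n + 1))

/-- If the proponent has a grounded winning strategy in the dispute tree induced by
`a`, then `a` belongs to the grounded extension. -/
theorem groundedWinning_mem_grounded {α : Type*} (att : α → α → Prop)
    (hfin : ∀ x : α, {b | att b x}.Finite)
    (σ : α → Option α) (a : α)
    (hσ : ∀ x y, σ x = some y → att y x)
    (hwin : groundedWinning att σ a) :
    a ∈ grounded att := by
  obtain ⟨hone, hnoinf⟩ := hwin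
  set R : α → α → Prop := fun c p => ∃ b, att b p ∧ σ b = some c with hR
  have hacc : Acc R a := by
    by_contra h
    have key : ∀ x, ¬ Acc R x → ∃ y, R y x ∧ ¬ Acc R y := by
      intro x hx
      by_contra hc
      push_neg at hc
      exact hx (Acc.intro x hc)
    let f : {x // ¬ Acc R x} → {x // ¬ Acc R x} :=
      fun z => ⟨(key z.1 z.2).choose, (key z.1 z.2).choose_spec.2⟩
    have hf : ∀ z : {x // ¬ Acc R x}, R (f z).1 z.1 :=
      fun z => (key z.1 z.2).choose_spec.1
    let g : ℕ → {x // ¬ Acc R x} := fun n => f^[n] ⟨a, h⟩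
    refine hnoinf ⟨fun n => (g n).1, rfl, fun n => ?_⟩
    have : g (n + 1) = f (g n) := Function.iterate_succ_apply' f n _
    show ∃ b, att b (g n).1 ∧ σ b = some (g (n+1)).1
    rw [this]
    exact hf (g n)
  have main : ∀ x, Acc R x → proPlayed att σ a x → x ∈ grounded att := by
    intro x hx
    induction hx with
    | intro x hh ih =>
      intro hp
      have hmem : x ∈ (charF att) (grounded att) := by
        intro b hb
        obtain ⟨c, hc⟩ := hone b ⟨x, hp, hb⟩
        exact ⟨c, ih c ⟨b, hb, hc⟩ (proPlayed.step hp hb hc), hσ b c hc⟩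
      have := OrderHom.map_lfp (charF att)
      rw [grounded]
      rw [← this]
      exact hmem
  exact main a hacc proPlayed.root
end

section
/- Every grounded winning strategy for the proponent in a dispute tree is also an admissible winning strategy, provided the framework is such that in T_σ no argument is labelled by both players; more precisely: if σ is a grounded winning strategy in the dispute tree induced by a, then the set of proponent arguments in T_σ is admissible. -/
/-- If `σ` is a grounded winning strategy in the dispute tree induced by `a`, then
the set of proponent arguments in `T_σ` is admissible. -/
theorem groundedWinning_proSet_admissible {α : Type*} (att : α → α → Prop)
    (hfin : ∀ x : α, {b | att b x}.Finite)
    (σ : α → Option α) (a : α)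
    (hσ : ∀ x y, σ x = some y → att y x)
    (hwin : groundedWinning att σ a) :
    admissible att {x | proPlayed att σ a x} := by
  classical
  obtain ⟨hone, hnoinf⟩ := hwin
  constructor
  · -- conflict free
    rintro p hp q hq hpq
    -- finite R-path from a to any proPlayed node
    have hpath : ∀ x, proPlayed att σ a x → ∃ n, ∃ g : ℕ → α, g 0 = a ∧ g n = x ∧
        ∀ i < n, ∃ b, att b (g i) ∧ σ b = some (g (i+1)) := by
      intro x hx
      induction hx with
      | root => exact ⟨0, fun _ => a, rfl, rfl, by omega⟩
      | @step r b c hr hatt hσc ih =>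
        obtain ⟨n, g, hg0, hgn, hgR⟩ := ih
        refine ⟨n+1, fun i => if i ≤ n then g i else c, by simp [hg0], by simp, ?_⟩
        intro i hi
        rcases lt_or_eq_of_le (Nat.lt_succ_iff.mp hi) with h | h
        · obtain ⟨b', hb1, hb2⟩ := hgR i h
          exact ⟨b', by simpa [Nat.le_of_lt h] using hb1,
            by simpa [Nat.succ_le_of_lt h] using hb2⟩
        · subst h
          exact ⟨b, by simpa [hgn] using hatt, by simpa using hσc⟩
    -- infinite extension via conflict pairs
    set nxt : α × α → α × α := fun xy => ((σ xy.1).getD xy.1, xy.1) with hnxt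
    set s : ℕ → α × α := fun k => nxt^[k] (p, q) with hs
    have hss : ∀ k, s (k+1) = nxt (s k) := by
      intro k; simp [hs, Function.iterate_succ_apply']
    have hinv : ∀ k, att (s k).1 (s k).2 ∧ proPlayed att σ a (s k).1 ∧
        proPlayed att σ a (s k).2 := by
      intro k
      induction k with
      | zero => exact ⟨hpq, hp, hq⟩
      | succ k ih =>
        obtain ⟨ha1, hp1, hp2⟩ := ih
        obtain ⟨c, hc⟩ := hone (s k).1 ⟨(s k).2, hp2, ha1⟩
        have h1 : (s (k+1)).1 = c := by simp [hss k, hnxt, hc]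
        have h2 : (s (k+1)).2 = (s k).1 := by simp [hss k, hnxt]
        refine ⟨?_, ?_, ?_⟩
        · rw [h1, h2]; exact hσ _ _ hc
        · rw [h1]; exact proPlayed.step hp2 ha1 hc
        · rw [h2]; exact hp1
    have hRstep : ∀ k, ∃ b, att b ((s k).2) ∧ σ b = some ((s (k+2)).2) := by
      intro k
      obtain ⟨ha1, hp1, hp2⟩ := hinv k
      obtain ⟨c, hc⟩ := hone (s k).1 ⟨(s k).2, hp2, ha1⟩
      have h1 : (s (k+1)).1 = c := by simp [hss k, hnxt, hc]
      have h2 : (s (k+2)).2 = (s (k+1)).1 := by simp [hss (k+1), hnxt]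
      exact ⟨(s k).1, ha1, by rw [h2, h1]; exact hc⟩
    obtain ⟨n, g, hg0, hgn, hgR⟩ := hpath q hq
    apply hnoinf
    refine ⟨fun i => if i < n then g i else (s (2*(i-n))).2, ?_, ?_⟩
    · by_cases h : 0 < n
      · simp [h, hg0]
      · have hn0 : n = 0 := by omega
        simp only [if_neg (by omega : ¬ (0:ℕ) < n)]
        subst hn0
        simpa [hs] using hgn.symm ▸ hg0.symm ▸ rfl
    · intro i
      by_cases h1 : i + 1 < n
      · obtain ⟨b, hb1, hb2⟩ := hgR i (by omega)
        exact ⟨b, by simpa [Nat.lt_of_succ_lt h1] using hb1, by simpa [h1] using hb2⟩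
      · by_cases h2 : i < n
        · -- i + 1 = n
          have hin : i + 1 = n := by omega
          obtain ⟨b, hb1, hb2⟩ := hgR i (by omega)
          have hq' : (s (2*(i+1-n))).2 = q := by
            have : i + 1 - n = 0 := by omega
            simp [this, hs]
          refine ⟨b, by simpa [h2] using hb1, ?_⟩
          simp only [if_neg (by omega : ¬ i + 1 < n), hq']
          rw [← hgn, ← hin]; exact hb2
        · -- both ≥ n
          obtain ⟨b, hb1, hb2⟩ := hRstep (2*(i-n))
          have harith : 2*(i+1-n) = 2*(i-n) + 2 := by omega
          refine ⟨b, by simpa [h2] using hb1, ?_⟩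
          simp only [if_neg (by omega : ¬ i + 1 < n), harith]
          exact hb2
  · -- acceptability
    intro x hx b hb
    obtain ⟨c, hc⟩ := hone b ⟨x, hx, hb⟩
    exact ⟨c, proPlayed.step hx hb hc, hσ _ _ hc⟩
end
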